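/- arXiv:1807.07233 — 2 statements merged into one kernel-verified Lean document; each statement's English description precedes it below -/
import Mathlib

section
/- For every natural number s there exists a constant D = D(s) with the following property: for every prime p and every finite group G of sectional p-rank at most s, and for every chief series 1 = G_0 ≤ G_1 ≤ ... ≤ G_n = G of G (each G_i normal in G, and for each i there is no subgroup normal in G strictly between G_i and G_{i+1}), the number of indices i such that the chief factor G_{i+1}/G_i is a p-group and is complemented in G/G_i (i.e., there exists a subgroup C of G with G_i ≤ C, C ∩ G_{i+1} = G_i, and C·G_{i+1} = G) is at most D. The bound D depends only on s, not on p. -/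
/-- A finite group `G` has sectional `p`-rank at most `r`: for all subgroups `K ⊴ L ≤ G`
such that `L/K` is an elementary abelian `p`-group, one has `|L/K| ≤ p^r`. -/
def SectionalRankLe (p : ℕ) (G : Type) [Group G] (r : ℕ) : Prop :=
  ∀ (L : Subgroup G) (K : Subgroup L) (_ : K.Normal),
    (∀ x : L ⧸ K, x ^ p = 1) → (∀ x y : L ⧸ K, x * y = y * x) →
      Nat.card (L ⧸ K) ≤ p ^ r

/-!
The bound is `D = s`. Walk up the chief series. Quotienting by the bottom term `N = σ 1` never
increases the sectional `p`-rank, and lowers it by one when `N` is a `p`-group with a complement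
`C`: an elementary abelian section `L/K` of `G/N ≅ C` lifts to `C`, a Sylow `p`-subgroup `P` of the
lift still maps onto `L/K`, and `P`, acting on the nontrivial `p`-group `N` by conjugation, fixes
some `z ∈ N` of order `p`. As `C ∩ N = 1`, the group `⟨z⟩ × P` embeds in `G`, and it maps onto the
elementary abelian group `⟨z⟩ × L/K` of order `p · |L/K|`.
-/

def HasElemAbSection (p : ℕ) (G : Type*) [Group G] (c : ℕ) : Prop :=
  ∃ (L : Subgroup G) (K : Subgroup L) (_ : K.Normal),
    (∀ x : L ⧸ K, x ^ p = 1) ∧ (∀ x y : L ⧸ K, x * y = y * x) ∧ Nat.card (L ⧸ K) = c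

theorem sectionalRankLe_iff {p r : ℕ} {G : Type} [Group G] :
    SectionalRankLe p G r ↔ ∀ c, HasElemAbSection p G c → c ≤ p ^ r := by
  constructor
  · rintro h c ⟨L, K, hK, hexp, hcomm, rfl⟩
    exact h L K hK hexp hcomm
  · intro h L K hK hexp hcomm
    exact h _ ⟨L, K, hK, hexp, hcomm, rfl⟩

namespace HasElemAbSection

variable {p c : ℕ} {G : Type*} [Group G]

theorem of_injective_of_surjective {E A : Type*} [Group E] [Group A] {μ : E →* G}
    (hμ : Function.Injective μ) {ν : E →* A} (hν : Function.Surjective ν)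
    (hexp : ∀ a : A, a ^ p = 1) (hcomm : ∀ a b : A, a * b = b * a) :
    HasElemAbSection p G (Nat.card A) := by
  let f : μ.range →* A := ν.comp (MonoidHom.ofInjective hμ).symm.toMonoidHom
  have hf : Function.Surjective f := hν.comp (MulEquiv.surjective _)
  let φ : μ.range ⧸ f.ker ≃* A := QuotientGroup.quotientKerEquivOfSurjective f hf
  refine ⟨μ.range, f.ker, inferInstance, fun x => φ.injective ?_, fun x y => φ.injective ?_,
    Nat.card_congr φ.toEquiv⟩
  · rw [map_pow, hexp, map_one]
  · rw [map_mul, map_mul, hcomm]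

theorem of_surjective {G' : Type*} [Group G'] {f : G' →* G} (hf : Function.Surjective f)
    (h : HasElemAbSection p G c) : HasElemAbSection p G' c := by
  obtain ⟨L, K, _, hexp, hcomm, rfl⟩ := h
  exact of_injective_of_surjective (ν := (QuotientGroup.mk' K).comp (f.subgroupComap L))
    (L.comap f).subtype_injective
    ((QuotientGroup.mk'_surjective K).comp (f.subgroupComap_surjective_of_surjective L hf))
    hexp hcomm

theorem one : HasElemAbSection p G 1 := by
  simpa using of_injective_of_surjective (μ := (1 : Unit →* G)) (ν := MonoidHom.id Unit)
    (fun _ _ _ => rfl) Function.surjective_id (fun _ => rfl) (fun _ _ => rfl)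

end HasElemAbSection

theorem IsPGroup.exists_surjective_comp_subtype {p : ℕ} [Fact p.Prime] {H Q : Type*} [Group H]
    [Group Q] [Finite H] {f : H →* Q} (hf : Function.Surjective f) (hQ : IsPGroup p Q) :
    ∃ P : Subgroup H, IsPGroup p P ∧ Function.Surjective (f.comp P.subtype) := by
  obtain ⟨P⟩ := (inferInstance : Nonempty (Sylow p H))
  have hPQ : P.map f = ⊤ := ((P.mapSurjective hf).is_maximal' (hQ.to_subgroup ⊤) le_top).symm
  refine ⟨P, P.isPGroup', fun q => ?_⟩
  obtain ⟨x, hx, rfl⟩ := (Subgroup.mem_map).mp (hPQ ▸ Subgroup.mem_top q)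
  exact ⟨⟨x, hx⟩, rfl⟩

theorem IsPGroup.exists_orderOf_eq_prime_commute {p : ℕ} [Fact p.Prime] {G P : Type*} [Group G]
    [Group P] [Finite G] {N : Subgroup G} [N.Normal] (hN : IsPGroup p N) (hN1 : N ≠ ⊥)
    (hP : IsPGroup p P) (φ : P →* G) :
    ∃ z ∈ N, orderOf z = p ∧ ∀ x, Commute z (φ x) := by
  let _ : MulDistribMulAction P N :=
    MulDistribMulAction.compHom N ((MulAut.conjNormal (H := N)).comp φ)
  have hpN : p ∣ Nat.card N := hN.card_eq_or_dvd.resolve_left (mt Subgroup.card_eq_one.mp hN1)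
  obtain ⟨w, hw, hw1⟩ := hP.exists_fixed_point_of_prime_dvd_card_of_fixed_point N hpN
    (a := 1) fun x => smul_one _
  let Z : Subgroup G := N ⊓ Subgroup.centralizer (Set.range φ)
  have hwZ : (w : G) ∈ Z := by
    refine ⟨w.2, Subgroup.mem_centralizer_iff.mpr ?_⟩
    rintro _ ⟨x, rfl⟩
    have hconj : φ x * w * (φ x)⁻¹ = w := by
      rw [← MulAut.conjNormal_apply]
      exact congrArg Subtype.val (hw x)
    exact mul_inv_eq_iff_eq_mul.mp hconj
  have hZ : IsPGroup p Z := hN.to_le inf_le_left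
  have hZ1 : Z ≠ ⊥ := fun h => hw1 (Subtype.ext ((Subgroup.mem_bot.mp (h ▸ hwZ)).symm))
  obtain ⟨z, hz⟩ := exists_prime_orderOf_dvd_card' p
    (hZ.card_eq_or_dvd.resolve_left (mt Subgroup.card_eq_one.mp hZ1))
  refine ⟨z, z.2.1, by rwa [Subgroup.orderOf_coe], fun x => ?_⟩
  exact ((Subgroup.mem_centralizer_iff.mp z.2.2 _ ⟨x, rfl⟩)).symm

theorem HasElemAbSection.prime_mul_of_disjoint {p : ℕ} [Fact p.Prime] {G D A : Type*} [Group G]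
    [Group D] [Group A] [Finite G] {N : Subgroup G} [N.Normal] (hN : IsPGroup p N) (hN1 : N ≠ ⊥)
    {ι : D →* G} (hι : Function.Injective ι) (hιN : Disjoint ι.range N)
    {θ : D →* A} (hθ : Function.Surjective θ)
    (hexp : ∀ a : A, a ^ p = 1) (hcomm : ∀ a b : A, a * b = b * a) :
    HasElemAbSection p G (p * Nat.card A) := by
  have : Finite D := Finite.of_injective ι hι
  obtain ⟨P, hP, hθP⟩ := IsPGroup.exists_surjective_comp_subtype hθ
    (fun a => ⟨1, by rw [pow_one, hexp]⟩)
  obtain ⟨z, hzN, hz, hzP⟩ := hN.exists_orderOf_eq_prime_commute hN1 hP (ι.comp P.subtype)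
  have hcard : Nat.card (Subgroup.zpowers z) = p := (Nat.card_zpowers z).trans hz
  have hzexp (a : Subgroup.zpowers z) : a ^ p = 1 := hcard ▸ pow_card_eq_one'
  let μ : Subgroup.zpowers z × P →* G := (Subgroup.zpowers z).subtype.noncommCoprod
    (ι.comp P.subtype) fun ⟨_, k, hk⟩ x => hk ▸ (hzP x).zpow_left k
  have hμ : Function.Injective μ := by
    refine (injective_iff_map_eq_one μ).mpr fun ⟨a, x⟩ hax => ?_
    have haN : (a : G) ∈ N := Subgroup.zpowers_le.mpr hzN a.2
    have ha : (a : G) = ι x⁻¹ := by rw [map_inv]; exact eq_inv_of_mul_eq_one_left hax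
    have ha1 : a = 1 := Subtype.ext (Subgroup.disjoint_def.mp hιN ⟨x⁻¹, ha.symm⟩ haN)
    subst ha1
    have hx1 : x = 1 := Subtype.ext (hι (by simpa [μ] using hax))
    rw [hx1, Prod.mk_one_one]
  have hsec := HasElemAbSection.of_injective_of_surjective hμ
    (ν := (MonoidHom.id _).prodMap (θ.comp P.subtype))
    (Prod.map_surjective.mpr ⟨Function.surjective_id, hθP⟩)
    (fun ⟨a, b⟩ => Prod.ext (hzexp a) (hexp b))
    (fun ⟨a, b⟩ ⟨a', b'⟩ => Prod.ext (mul_comm' a a') (hcomm b b'))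
  rwa [Nat.card_prod, hcard] at hsec

theorem QuotientGroup.mk'_comp_subtype_surjective {G : Type*} [Group G] {N C : Subgroup G}
    [N.Normal] (hCN : C ⊔ N = ⊤) : Function.Surjective ((QuotientGroup.mk' N).comp C.subtype) := by
  intro y
  obtain ⟨g, rfl⟩ := QuotientGroup.mk'_surjective N y
  have hg : g ∈ ((C ⊔ N : Subgroup G) : Set G) := by rw [hCN]; trivial
  rw [Subgroup.mul_normal] at hg
  obtain ⟨c, hc, n, hn, rfl⟩ := hg
  exact ⟨⟨c, hc⟩, (QuotientGroup.mk_mul_of_mem c hn).symm⟩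

theorem HasElemAbSection.prime_mul_of_quotient {p c : ℕ} [Fact p.Prime] {G : Type*} [Group G]
    [Finite G] {N C : Subgroup G} [N.Normal] (hN : IsPGroup p N) (hN1 : N ≠ ⊥)
    (hCN : C ⊓ N = ⊥) (hCN' : C ⊔ N = ⊤) (h : HasElemAbSection p (G ⧸ N) c) :
    HasElemAbSection p G (p * c) := by
  obtain ⟨L, K, _, hexp, hcomm, rfl⟩ :=
    h.of_surjective (QuotientGroup.mk'_comp_subtype_surjective hCN')
  refine prime_mul_of_disjoint hN hN1 (ι := C.subtype.comp L.subtype)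
    (C.subtype_injective.comp L.subtype_injective) ?_ (QuotientGroup.mk'_surjective K) hexp hcomm
  refine (disjoint_iff.mpr hCN).mono_left ?_
  rw [MonoidHom.range_comp, L.range_subtype]
  exact Subgroup.map_subtype_le L

theorem SectionalRankLe.quotient {p s : ℕ} {G : Type} [Group G] (N : Subgroup G) [N.Normal]
    (hs : SectionalRankLe p G s) : SectionalRankLe p (G ⧸ N) s :=
  sectionalRankLe_iff.mpr fun c hc =>
    sectionalRankLe_iff.mp hs c (hc.of_surjective (QuotientGroup.mk'_surjective N))

def IsSplitPFactor (p : ℕ) {G : Type*} [Group G] (A B : Subgroup G) : Prop :=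
  (∃ m : ℕ, A.relIndex B = p ^ m) ∧ ∃ C : Subgroup G, A ≤ C ∧ C ⊓ B = A ∧ C ⊔ B = ⊤

theorem SectionalRankLe.quotient_sub_one {p s : ℕ} [hp : Fact p.Prime] {G : Type} [Group G]
    [Finite G] {N : Subgroup G} [N.Normal] (hs : SectionalRankLe p G s) (hN1 : N ≠ ⊥)
    (hN : IsSplitPFactor p ⊥ N) : 0 < s ∧ SectionalRankLe p (G ⧸ N) (s - 1) := by
  obtain ⟨⟨m, hm⟩, C, -, hCN, hCN'⟩ := hN
  rw [Subgroup.relIndex_bot_left] at hm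
  have key (c : ℕ) (hc : HasElemAbSection p (G ⧸ N) c) : p * c ≤ p ^ s :=
    sectionalRankLe_iff.mp hs _ (hc.prime_mul_of_quotient (IsPGroup.of_card hm) hN1 hCN hCN')
  have hs0 : 0 < s := by
    by_contra! h0
    have := key 1 HasElemAbSection.one
    rw [Nat.le_zero.mp h0, mul_one, pow_zero] at this
    exact hp.out.one_lt.not_ge this
  refine ⟨hs0, sectionalRankLe_iff.mpr fun c hc => ?_⟩
  have := key c hc
  rw [← Nat.succ_pred_eq_of_pos hs0, pow_succ'] at this
  exact Nat.le_of_mul_le_mul_left this hp.out.pos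

theorem Subgroup.map_inf_of_ker_le {G H : Type*} [Group G] [Group H] (f : G →* H)
    {B : Subgroup G} (C : Subgroup G) (hB : f.ker ≤ B) : (C ⊓ B).map f = C.map f ⊓ B.map f := by
  refine le_antisymm (map_inf_le C B f) ?_
  rintro _ ⟨⟨c, hc, rfl⟩, b, hb, hbc⟩
  have hcB : c ∈ B := by
    have : b⁻¹ * c ∈ B := hB (by rw [MonoidHom.mem_ker, map_mul, map_inv, hbc, inv_mul_cancel])
    simpa using B.mul_mem hb this
  exact ⟨c, ⟨hc, hcB⟩, rfl⟩

theorem IsSplitPFactor.map_mk' {p : ℕ} {G : Type*} [Group G] {N A B : Subgroup G} [N.Normal]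
    (hNA : N ≤ A) (hAB : A ≤ B) (h : IsSplitPFactor p A B) :
    IsSplitPFactor p (A.map (QuotientGroup.mk' N)) (B.map (QuotientGroup.mk' N)) := by
  obtain ⟨⟨m, hm⟩, C, hAC, hCB, hCB'⟩ := h
  refine ⟨⟨m, ?_⟩, C.map _, Subgroup.map_mono hAC, ?_, ?_⟩
  · rwa [Subgroup.relIndex_map_map, QuotientGroup.ker_mk', sup_eq_left.mpr hNA,
      sup_eq_left.mpr (hNA.trans hAB)]
  · rw [← hCB, Subgroup.map_inf_of_ker_le _ _ (by rw [QuotientGroup.ker_mk']; exact hNA.trans hAB)]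
  · rw [← Subgroup.map_sup, hCB', Subgroup.map_top_of_surjective _ (QuotientGroup.mk'_surjective N)]

open Classical in
theorem Fin.card_subtype_le_of_succ {n : ℕ} {Q : Fin (n + 1) → Prop} {Q' : Fin n → Prop}
    (h : ∀ j, Q j.succ → Q' j) :
    Nat.card {i // Q i} ≤ Nat.card {j // Q' j} + if Q 0 then 1 else 0 := by
  simp only [Nat.card_eq_fintype_card, Fintype.card_subtype]
  rw [Fin.card_filter_univ_succ', add_comm]
  gcongr
  exact h _

theorem card_isSplitPFactor_le {p n s : ℕ} [Fact p.Prime] {G : Type} [Group G] [Finite G]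
    (hs : SectionalRankLe p G s) {σ : Fin (n + 1) → Subgroup G} (hσ : StrictMono σ)
    (h0 : σ 0 = ⊥) (hnorm : ∀ i, (σ i).Normal) :
    Nat.card {i : Fin n // IsSplitPFactor p (σ i.castSucc) (σ i.succ)} ≤ s := by
  induction n generalizing G s with
  | zero => simp
  | succ n ih =>
    let N := σ 1
    have : N.Normal := hnorm 1
    have hN (j : Fin (n + 1)) : N ≤ σ j.succ := hσ.monotone (Fin.succ_pos j)
    let σ' (j : Fin (n + 1)) : Subgroup (G ⧸ N) := (σ j.succ).map (QuotientGroup.mk' N)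
    have hσ' : StrictMono σ' :=
      ((QuotientGroup.comapMk'OrderIso N).symm.strictMono.comp (f := fun j => ⟨σ j.succ, hN j⟩)
        fun _ _ hjk => hσ (Fin.succ_lt_succ_iff.mpr hjk) :)
    have h0' : σ' 0 = ⊥ := QuotientGroup.map_mk'_self N
    have hnorm' (j : Fin (n + 1)) : (σ' j).Normal :=
      (hnorm _).map _ (QuotientGroup.mk'_surjective N)
    have hsucc (j : Fin n) (h : IsSplitPFactor p (σ j.succ.castSucc) (σ j.succ.succ)) :
        IsSplitPFactor p (σ' j.castSucc) (σ' j.succ) := by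
      rw [← Fin.succ_castSucc] at h
      exact h.map_mk' (hN _) (hσ.monotone (Fin.succ_le_succ_iff.mpr (Fin.castSucc_le_succ j)))
    refine (Fin.card_subtype_le_of_succ hsucc).trans ?_
    split_ifs with hsplit
    · rw [Fin.castSucc_zero, h0] at hsplit
      obtain ⟨hpos, hs'⟩ := hs.quotient_sub_one (h0 ▸ (hσ Fin.zero_lt_one).ne') hsplit
      exact (Nat.add_le_add_right (ih hs' hσ' h0' hnorm') 1).trans_eq (Nat.sub_add_cancel hpos)
    · exact ih (hs.quotient N) hσ' h0' hnorm'

/-- For every natural number `s` there exists a constant `D = D(s)`, independent of the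
prime `p`, such that: for every prime `p`, every finite group `G` of sectional `p`-rank at
most `s`, and every chief series `⊥ = σ 0 ≤ σ 1 ≤ ⋯ ≤ σ n = ⊤` of `G` (each `σ i` normal in
`G`, with no normal subgroup of `G` strictly between consecutive terms), the number of
indices `i` such that the chief factor `σ (i+1) / σ i` is a `p`-group (its order, the
relative index, is a power of `p`) and is complemented in `G / σ i` is at most `D`. -/
theorem card_split_p_chief_factors_le (s : ℕ) :
    ∃ D : ℕ, ∀ (p : ℕ), p.Prime →
      ∀ (G : Type) [Group G] [Finite G], SectionalRankLe p G s →
      ∀ (n : ℕ) (σ : Fin (n + 1) → Subgroup G), StrictMono σ →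
        σ 0 = ⊥ → σ (Fin.last n) = ⊤ →
        (∀ i, (σ i).Normal) →
        (∀ i : Fin n, ∀ H : Subgroup G, H.Normal →
            ¬ (σ i.castSucc < H ∧ H < σ i.succ)) →
        Nat.card {i : Fin n //
          (∃ m : ℕ, (σ i.castSucc).relIndex (σ i.succ) = p ^ m) ∧
          (∃ C : Subgroup G, σ i.castSucc ≤ C ∧ C ⊓ σ i.succ = σ i.castSucc ∧
            C ⊔ σ i.succ = ⊤)} ≤ D := by
  refine ⟨s, fun p hp G _ _ hs n σ hσ h0 _ hnorm _ => ?_⟩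
  have : Fact p.Prime := ⟨hp⟩
  exact card_isSplitPFactor_le hs hσ h0 hnorm
end

section
/- Let G be a finite group generated by two subgroups H_1 and H_2, let A = H_1 ∩ H_2, let k be a field, and let V be a finite-dimensional kG-module. If H^1(H_1, V) = 0 and H^1(H_2, V) = 0 (cohomology of the restricted modules), then dim_k H^1(G,V) ≤ dim_k V^A, where V^A is the space of A-fixed vectors. -/
/-!
Since `H¹(H₁, V) = 0`, every class in `H¹(G, V)` is represented by a cocycle `f` vanishing on
`H₁`, and since `H¹(H₂, V) = 0`, the restriction of `f` to `H₂` is a coboundary `h ↦ h • w - w`.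
For `a ∈ H₁ ⊓ H₂` this gives `a • w - w = f a = 0`, so `w ∈ V^A`. The pairs `(f, w)` form a
subspace mapping onto `H¹(G, V)`, and `(f, w) ↦ w` is injective on it: if `w = 0`, then `f`
vanishes on `H₁` and on `H₂`, hence on the subgroup they generate, which is `G`.
-/

open Representation groupCohomology

namespace groupCohomology

universe u

variable {k G V : Type u} [CommRing k] [Group G] [AddCommGroup V] [Module k V]
  {ρ : Representation k G V}

lemma comp_subtype_mem_cocycles₁ (H : Subgroup G) {f : G → V}
    (hf : f ∈ cocycles₁ (Rep.of ρ)) : f ∘ H.subtype ∈ cocycles₁ (Rep.of (ρ.comp H.subtype)) :=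
  (mem_cocycles₁_iff _).2 fun g h => (mem_cocycles₁_iff (A := Rep.of ρ) f).1 hf g h

lemma mem_coboundaries₁_of_subsingleton {A : Rep k G} [Subsingleton (H1 A)]
    (f : cocycles₁ A) : ⇑f ∈ coboundaries₁ A :=
  (H1π_eq_zero_iff f).1 (Subsingleton.elim _ _)

lemma exists_eq_d₀₁_on (H : Subgroup G)
    [Subsingleton (H1 (Rep.of (ρ.comp H.subtype)))] (f : cocycles₁ (Rep.of ρ)) :
    ∃ w : V, ∀ h ∈ H, f h = ρ h w - w := by
  obtain ⟨w, hw⟩ := mem_coboundaries₁_of_subsingleton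
    (⟨_, comp_subtype_mem_cocycles₁ H f.2⟩ : cocycles₁ (Rep.of (ρ.comp H.subtype)))
  exact ⟨w, fun h hh => (congrFun hw ⟨h, hh⟩).symm⟩

lemma exists_H1π_eq_and_eq_zero_on (H : Subgroup G)
    [Subsingleton (H1 (Rep.of (ρ.comp H.subtype)))] (f : cocycles₁ (Rep.of ρ)) :
    ∃ g : cocycles₁ (Rep.of ρ), H1π (Rep.of ρ) g = H1π (Rep.of ρ) f ∧ ∀ h ∈ H, g h = 0 := by
  obtain ⟨v, hv⟩ := exists_eq_d₀₁_on H f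
  refine ⟨⟨f - (d₀₁ (Rep.of ρ)).hom v, sub_mem f.2 (d₀₁_apply_mem_cocycles₁ (A := Rep.of ρ) v)⟩,
    ?_, fun h hh => ?_⟩
  · rw [H1π_eq_iff]
    refine ⟨-v, ?_⟩
    ext g
    change ρ g (-v) - -v = (f g - (ρ g v - v)) - f g
    rw [map_neg]
    abel
  · change f h - (ρ h v - v) = 0
    rw [hv h hh, sub_self]

def cocycles₁.zeroSubgroup {A : Rep k G} (f : cocycles₁ A) : Subgroup G where
  carrier := {g | f g = 0}
  one_mem' := cocycles₁_map_one f
  mul_mem' {a b} ha hb := by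
    simp_all [(mem_cocycles₁_iff f).1 f.2 a b]
  inv_mem' {a} ha := by
    have h := (mem_cocycles₁_iff f).1 f.2 a⁻¹ a
    simp_all

lemma cocycles₁.eq_zero_of_closure_eq_top {A : Rep k G} (f : cocycles₁ A) {S : Set G}
    (hS : Subgroup.closure S = ⊤) (hf : ∀ g ∈ S, f g = 0) : f = 0 :=
  cocycles₁_ext fun g =>
    (Subgroup.closure_le (cocycles₁.zeroSubgroup f) |>.2 hf) (hS ▸ Subgroup.mem_top g)

noncomputable section

variable (ρ) in
def adaptedCocycles₁ (H₁ H₂ : Subgroup G) : Submodule k ((G → V) × V) where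
  carrier := {p | p.1 ∈ cocycles₁ (Rep.of ρ) ∧ (∀ h ∈ H₁, p.1 h = 0) ∧
    ∀ h ∈ H₂, p.1 h = ρ h p.2 - p.2}
  add_mem' := by
    rintro p q ⟨hp, hp₁, hp₂⟩ ⟨hq, hq₁, hq₂⟩
    refine ⟨add_mem hp hq, fun h hh => ?_, fun h hh => ?_⟩
    · simp [hp₁ h hh, hq₁ h hh]
    · simp only [Prod.fst_add, Prod.snd_add, Pi.add_apply, hp₂ h hh, hq₂ h hh, map_add]
      abel
  zero_mem' := ⟨zero_mem _, fun _ _ => rfl, fun _ _ => by simp⟩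
  smul_mem' := by
    rintro c p ⟨hp, hp₁, hp₂⟩
    exact ⟨Submodule.smul_mem _ c hp, fun h hh => by simp [hp₁ h hh],
      fun h hh => by simp [hp₂ h hh, smul_sub]⟩

namespace adaptedCocycles₁

variable {H₁ H₂ : Subgroup G}

def toInvariants :
    adaptedCocycles₁ ρ H₁ H₂ →ₗ[k] invariants (ρ.comp (H₁ ⊓ H₂).subtype) :=
  LinearMap.codRestrict _ (LinearMap.snd k (G → V) V ∘ₗ Submodule.subtype _)
    fun ⟨⟨_, w⟩, _, hf₁, hf₂⟩ ⟨a, ha₁, ha₂⟩ =>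
      (sub_eq_zero.1 ((hf₂ a ha₂).symm.trans (hf₁ a ha₁)) : ρ a w = w)

lemma toInvariants_injective (hgen : H₁ ⊔ H₂ = ⊤) :
    Function.Injective (toInvariants (ρ := ρ) (H₁ := H₁) (H₂ := H₂)) := by
  rw [← LinearMap.ker_eq_bot, Submodule.eq_bot_iff]
  rintro ⟨⟨f, w⟩, hf, hf₁, hf₂⟩ hw
  obtain rfl : w = 0 := congrArg Subtype.val hw
  have hS : Subgroup.closure ((H₁ : Set G) ∪ H₂) = ⊤ := by
    rw [Subgroup.closure_union, Subgroup.closure_eq, Subgroup.closure_eq, hgen]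
  have := cocycles₁.eq_zero_of_closure_eq_top (A := Rep.of ρ) ⟨f, hf⟩ hS <| by
    rintro g (hg | hg)
    · exact hf₁ g hg
    · exact (hf₂ g hg).trans (by simp)
  exact Subtype.ext (Prod.ext (congrArg Subtype.val this) rfl)

def toH1 : adaptedCocycles₁ ρ H₁ H₂ →ₗ[k] H1 (Rep.of ρ) :=
  (H1π (Rep.of ρ)).hom ∘ₗ
    LinearMap.codRestrict _ (LinearMap.fst k (G → V) V ∘ₗ Submodule.subtype _) fun p => p.2.1

lemma toH1_surjective [Subsingleton (H1 (Rep.of (ρ.comp H₁.subtype)))]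
    [Subsingleton (H1 (Rep.of (ρ.comp H₂.subtype)))] :
    Function.Surjective (toH1 (ρ := ρ) (H₁ := H₁) (H₂ := H₂)) := by
  intro c
  induction c using H1_induction_on with | h f => ?_
  obtain ⟨g, hgf, hg₁⟩ := exists_H1π_eq_and_eq_zero_on H₁ f
  obtain ⟨w, hw⟩ := exists_eq_d₀₁_on H₂ g
  exact ⟨⟨(g, w), g.2, hg₁, hw⟩, hgf⟩

end adaptedCocycles₁

end

end groupCohomology

theorem dim_H1_le_dim_fixedPoints_of_generating_general (G : Type) [Group G]
    (H₁ H₂ : Subgroup G) (hgen : H₁ ⊔ H₂ = ⊤)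
    (k V : Type) [Field k] [AddCommGroup V] [Module k V] [FiniteDimensional k V]
    (ρ : Representation k G V)
    (h1 : Subsingleton (groupCohomology (Rep.of (ρ.comp H₁.subtype)) 1))
    (h2 : Subsingleton (groupCohomology (Rep.of (ρ.comp H₂.subtype)) 1)) :
    Module.finrank k (groupCohomology (Rep.of ρ) 1)
      ≤ Module.finrank k (Representation.invariants (ρ.comp (H₁ ⊓ H₂).subtype)) := by
  have hinj := adaptedCocycles₁.toInvariants_injective (ρ := ρ) hgen
  have : FiniteDimensional k (adaptedCocycles₁ ρ H₁ H₂) := .of_injective _ hinj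
  calc Module.finrank k (groupCohomology (Rep.of ρ) 1)
      ≤ Module.finrank k (adaptedCocycles₁ ρ H₁ H₂) :=
        LinearMap.finrank_le_finrank_of_surjective adaptedCocycles₁.toH1_surjective
    _ ≤ _ := LinearMap.finrank_le_finrank_of_injective hinj

/-- Let `G` be a finite group generated by subgroups `H₁` and `H₂`, with `A = H₁ ⊓ H₂`,
`k` a field and `V` a finite-dimensional `kG`-module. If `H¹(H₁,V) = 0` and
`H¹(H₂,V) = 0`, then `dim H¹(G,V) ≤ dim V^A`. -/
theorem dim_H1_le_dim_fixedPoints_of_generating (G : Type) [Group G] [Finite G]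
    (H₁ H₂ : Subgroup G) (hgen : H₁ ⊔ H₂ = ⊤)
    (k V : Type) [Field k] [AddCommGroup V] [Module k V] [FiniteDimensional k V]
    (ρ : Representation k G V)
    (h1 : Subsingleton (groupCohomology (Rep.of (ρ.comp H₁.subtype)) 1))
    (h2 : Subsingleton (groupCohomology (Rep.of (ρ.comp H₂.subtype)) 1)) :
    Module.finrank k (groupCohomology (Rep.of ρ) 1)
      ≤ Module.finrank k (Representation.invariants (ρ.comp (H₁ ⊓ H₂).subtype)) :=
  dim_H1_le_dim_fixedPoints_of_generating_general G H₁ H₂ hgen k V ρ h1 h2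
end
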